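/- Let φ ∈ H₁ ⊗ H₂ be written as φ = μ·Φ₀⊗|0⟩ + ν·Φ₁⊗|1⟩ with Φ₀, Φ₁ unit vectors in H₁, |0⟩,|1⟩ orthonormal in H₂, and μ, ν ≥ 0 with μ²+ν² > 0. Let T = (λ/N)·I ⊗ (I + s·|0⟩⟨0|) − |φ⟩⟨φ| on H₁ ⊗ H₂ with λ, N > 0 and s ≥ 0, where dim H₁ = 2. Then T is positive semidefinite if and only if λ/N ≥ μ²/(1+s) + ν². -/

import Mathlib

open ComplexOrder

/-- The inner product `∑ i, conj (x i) * y i`. -/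
noncomputable def inn {ι : Type*} [Fintype ι] (x y : ι → ℂ) : ℂ := ∑ i, star (x i) * y i

/-- Kronecker product of two qubit matrices. -/
def kron2 (A B : Matrix (Fin 2) (Fin 2) ℂ) : Matrix (Fin 2 × Fin 2) (Fin 2 × Fin 2) ℂ :=
  fun p q => A p.1 q.1 * B p.2 q.2

/-- The projector `|0⟩⟨0|` on `ℂ²`. -/
def ket0proj : Matrix (Fin 2) (Fin 2) ℂ :=
  fun j j' => if j = 0 ∧ j' = 0 then 1 else 0

/-- The vector `φ = μ·Φ₀ ⊗ |0⟩ + ν·Φ₁ ⊗ |1⟩`. -/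
noncomputable def phiv (μ ν : ℝ) (Φ0 Φ1 : Fin 2 → ℂ) : Fin 2 × Fin 2 → ℂ :=
  fun p => (μ : ℂ) * Φ0 p.1 * (if p.2 = 0 then 1 else 0) +
    (ν : ℂ) * Φ1 p.1 * (if p.2 = 1 then 1 else 0)

/-- The operator `T = (λ/N)·I ⊗ (I + s|0⟩⟨0|) − |φ⟩⟨φ|` on `ℂ² ⊗ ℂ²`. -/
noncomputable def Twit (μ ν s lam N : ℝ) (Φ0 Φ1 : Fin 2 → ℂ) :
    Matrix (Fin 2 × Fin 2) (Fin 2 × Fin 2) ℂ :=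
  ((lam / N : ℝ) : ℂ) •
      kron2 (1 : Matrix (Fin 2) (Fin 2) ℂ)
        ((1 : Matrix (Fin 2) (Fin 2) ℂ) + ((s : ℝ) : ℂ) • ket0proj) -
    Matrix.vecMulVec (phiv μ ν Φ0 Φ1) (star (phiv μ ν Φ0 Φ1))

-- A x abbreviation
noncomputable def Ax (μ ν : ℝ) (Φ0 Φ1 : Fin 2 → ℂ) (x : Fin 2 × Fin 2 → ℂ) : ℂ :=
  (μ:ℂ) * ((starRingEnd ℂ) (Φ0 0) * x (0,0) + (starRingEnd ℂ) (Φ0 1) * x (1,0))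
    + (ν:ℂ) * ((starRingEnd ℂ) (Φ1 0) * x (0,1) + (starRingEnd ℂ) (Φ1 1) * x (1,1))

lemma quadC (μ ν s lam N : ℝ) (Φ0 Φ1 : Fin 2 → ℂ) (x : Fin 2 × Fin 2 → ℂ) :
    dotProduct (star x) ((Twit μ ν s lam N Φ0 Φ1).mulVec x) =
      ((lam/N : ℝ) : ℂ) * ((1+(s:ℂ)) * ((starRingEnd ℂ) (x (0,0)) * x (0,0)
          + (starRingEnd ℂ) (x (1,0)) * x (1,0))
        + ((starRingEnd ℂ) (x (0,1)) * x (0,1) + (starRingEnd ℂ) (x (1,1)) * x (1,1)))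
      - (starRingEnd ℂ) (Ax μ ν Φ0 Φ1 x) * Ax μ ν Φ0 Φ1 x := by
  simp [Twit, kron2, ket0proj, phiv, Ax, Matrix.mulVec, dotProduct,
    Fintype.sum_prod_type, Fin.sum_univ_two, Matrix.vecMulVec, Matrix.one_apply,
    Matrix.sub_apply, Matrix.smul_apply, Matrix.add_apply, Pi.star_apply, map_add, map_mul,
    Complex.conj_ofReal, smul_eq_mul]
  ring

lemma mc (z : ℂ) : (starRingEnd ℂ) z * z = (Complex.normSq z : ℂ) := by
  rw [mul_comm, Complex.mul_conj]

lemma quadR (μ ν s lam N : ℝ) (Φ0 Φ1 : Fin 2 → ℂ) (x : Fin 2 × Fin 2 → ℂ) :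
    dotProduct (star x) ((Twit μ ν s lam N Φ0 Φ1).mulVec x) =
      (((lam/N) * ((1+s) * (Complex.normSq (x (0,0)) + Complex.normSq (x (1,0)))
        + (Complex.normSq (x (0,1)) + Complex.normSq (x (1,1))))
      - Complex.normSq (Ax μ ν Φ0 Φ1 x) : ℝ) : ℂ) := by
  rw [quadC, mc, mc, mc, mc, mc]
  push_cast
  ring

lemma herm (μ ν s lam N : ℝ) (Φ0 Φ1 : Fin 2 → ℂ) :
    (Twit μ ν s lam N Φ0 Φ1).IsHermitian := by
  ext p q
  simp only [Twit, kron2, ket0proj, phiv, Matrix.conjTranspose_apply, Matrix.vecMulVec,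
    Matrix.one_apply, Matrix.sub_apply, Matrix.smul_apply, Matrix.add_apply, Pi.star_apply,
    Matrix.of_apply, map_sub, map_mul, map_add, Complex.conj_ofReal, smul_eq_mul,
    RingHomCompTriple.comp_apply, RingHom.id_apply, apply_ite (starRingEnd ℂ), map_one, map_zero,
    starRingEnd_self_apply]
  obtain ⟨p1, p2⟩ := p; obtain ⟨q1, q2⟩ := q
  fin_cases p1 <;> fin_cases q1 <;> fin_cases p2 <;> fin_cases q2 <;> simp <;> ring

lemma normSq_unit (Φ : Fin 2 → ℂ) (h : inn Φ Φ = 1) :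
    Complex.normSq (Φ 0) + Complex.normSq (Φ 1) = 1 := by
  have h2 : ((Complex.normSq (Φ 0) + Complex.normSq (Φ 1) : ℝ) : ℂ) = 1 := by
    rw [← h]; simp only [inn, Fin.sum_univ_two, Pi.star_apply, RCLike.star_def, mc]
    push_cast; ring
  exact_mod_cast h2


set_option maxHeartbeats 2000000 in
/-- `T` is positive semidefinite iff `λ/N ≥ μ²/(1+s) + ν²`. -/
theorem stmt19 (μ ν s lam N : ℝ) (hμ : 0 ≤ μ) (hν : 0 ≤ ν) (hs : 0 ≤ s)
    (hlam : 0 < lam) (hN : 0 < N) (hμν : 0 < μ ^ 2 + ν ^ 2)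
    (Φ0 Φ1 : Fin 2 → ℂ) (h0 : inn Φ0 Φ0 = 1) (h1 : inn Φ1 Φ1 = 1) :
    (Twit μ ν s lam N Φ0 Φ1).PosSemidef ↔ lam / N ≥ μ ^ 2 / (1 + s) + ν ^ 2 := by
  have hsp : (0:ℝ) < 1 + s := by linarith
  set c : ℝ := lam / N with hc
  set K : ℝ := μ ^ 2 / (1 + s) + ν ^ 2 with hKdef
  have hΦ0 := normSq_unit Φ0 h0
  have hΦ1 := normSq_unit Φ1 h1
  have hKpos : 0 < K := by
    have h2 : ν ^ 2 / (1 + s) ≤ ν ^ 2 := div_le_self (sq_nonneg ν) (by linarith)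
    have h3 : 0 < (μ ^ 2 + ν ^ 2) / (1 + s) := div_pos hμν hsp
    rw [add_div] at h3
    rw [hKdef]; linarith
  -- pointwise criterion
  have crit : ∀ x : Fin 2 × Fin 2 → ℂ,
      (0 ≤ dotProduct (star x) ((Twit μ ν s lam N Φ0 Φ1).mulVec x)) ↔
      Complex.normSq (Ax μ ν Φ0 Φ1 x) ≤
        c * ((1+s) * (Complex.normSq (x (0,0)) + Complex.normSq (x (1,0)))
          + (Complex.normSq (x (0,1)) + Complex.normSq (x (1,1)))) := by
    intro x
    rw [quadR, Complex.zero_le_real, sub_nonneg]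
  constructor
  · intro hPSD; obtain ⟨-, hpos⟩ := Matrix.posSemidef_iff_dotProduct_mulVec.mp hPSD
    set ψ : Fin 2 × Fin 2 → ℂ := fun p =>
      if p.2 = 0 then ((μ / (1+s) : ℝ) : ℂ) * Φ0 p.1 else (ν : ℂ) * Φ1 p.1 with hψ
    have hcrit := (crit ψ).mp (hpos ψ)
    have hA : Ax μ ν Φ0 Φ1 ψ = ((K : ℝ) : ℂ) := by
      have e0 := mc (Φ0 0); have e1 := mc (Φ0 1)
      have f0 := mc (Φ1 0); have f1 := mc (Φ1 1)
      have hc0 : ((Complex.normSq (Φ0 0) : ℝ) : ℂ) + ((Complex.normSq (Φ0 1) : ℝ) : ℂ) = 1 := by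
        exact_mod_cast congrArg (Complex.ofReal) hΦ0
      have hc1 : ((Complex.normSq (Φ1 0) : ℝ) : ℂ) + ((Complex.normSq (Φ1 1) : ℝ) : ℂ) = 1 := by
        exact_mod_cast congrArg (Complex.ofReal) hΦ1
      simp only [Ax, hψ, hKdef]
      push_cast
      have hsC : (1 : ℂ) + (s:ℂ) ≠ 0 := by
        exact_mod_cast Complex.ofReal_ne_zero.mpr (ne_of_gt hsp)
      field_simp
      linear_combination ((μ:ℂ)^2) * e0 + ((μ:ℂ)^2) * e1
        + ((ν:ℂ)^2 * (1+(s:ℂ))) * f0 + ((ν:ℂ)^2 * (1+(s:ℂ))) * f1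
        + ((μ:ℂ)^2) * hc0 + ((ν:ℂ)^2 * (1+(s:ℂ))) * hc1
    rw [hA] at hcrit
    have hns : Complex.normSq (1 + (s:ℂ)) = (1+s)^2 := by
      rw [show (1:ℂ)+(s:ℂ) = ((1+s:ℝ):ℂ) by push_cast; ring, Complex.normSq_ofReal]; ring
    simp only [hψ] at hcrit
    norm_num [Complex.normSq_mul, Complex.normSq_ofReal, hns] at hcrit
    have hcpos : 0 < c := div_pos hlam hN
    have hSeq : (1+s) * (μ * μ / (1+s)^2 * Complex.normSq (Φ0 0)
          + μ * μ / (1+s)^2 * Complex.normSq (Φ0 1))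
        + (ν * ν * Complex.normSq (Φ1 0) + ν * ν * Complex.normSq (Φ1 1)) = K := by
      rw [hKdef]
      field_simp
      linear_combination μ^2 * hΦ0 + (ν^2*(1+s)) * hΦ1
    rw [hSeq] at hcrit
    nlinarith [hcrit, hKpos]
  · intro hle
    refine Matrix.PosSemidef.of_dotProduct_mulVec_nonneg (herm μ ν s lam N Φ0 Φ1) fun x => ?_
    rw [crit x]
    set rt : ℝ := Real.sqrt (1+s) with hrt
    have hrtpos : 0 < rt := Real.sqrt_pos.mpr hsp
    have hrt2 : rt ^ 2 = 1 + s := Real.sq_sqrt hsp.le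
    have hrtC : ((rt:ℝ):ℂ) ≠ 0 := Complex.ofReal_ne_zero.mpr (ne_of_gt hrtpos)
    set u : EuclideanSpace ℂ (Fin 2 × Fin 2) := WithLp.toLp 2 fun p =>
      if p.2 = 0 then ((μ / rt : ℝ):ℂ) * Φ0 p.1 else (ν:ℂ) * Φ1 p.1 with hu
    set v : EuclideanSpace ℂ (Fin 2 × Fin 2) := WithLp.toLp 2 fun p =>
      if p.2 = 0 then ((rt:ℝ):ℂ) * x p else x p with hv
    have huv : (inner ℂ u v : ℂ) = Ax μ ν Φ0 Φ1 x := by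
      simp only [PiLp.inner_apply, RCLike.inner_apply, Fintype.sum_prod_type,
        Fin.sum_univ_two, hu, hv, Ax]
      norm_num [Complex.conj_ofReal, map_mul]
      push_cast
      field_simp
      ring
    have huu : (inner ℂ u u : ℂ) = (((μ/rt)^2 * (Complex.normSq (Φ0 0) + Complex.normSq (Φ0 1))
        + ν^2 * (Complex.normSq (Φ1 0) + Complex.normSq (Φ1 1)) : ℝ) : ℂ) := by
      simp only [PiLp.inner_apply, RCLike.inner_apply, Fintype.sum_prod_type,
        Fin.sum_univ_two, hu]
      norm_num [Complex.conj_ofReal, map_mul]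
      push_cast
      linear_combination ((μ:ℂ)/rt)^2 * mc (Φ0 0) + ((μ:ℂ)/rt)^2 * mc (Φ0 1)
        + ((ν:ℂ))^2 * mc (Φ1 0) + ((ν:ℂ))^2 * mc (Φ1 1)
    have hvv : (inner ℂ v v : ℂ) = ((rt^2 * (Complex.normSq (x (0,0)) + Complex.normSq (x (1,0)))
        + (Complex.normSq (x (0,1)) + Complex.normSq (x (1,1))) : ℝ) : ℂ) := by
      simp only [PiLp.inner_apply, RCLike.inner_apply, Fintype.sum_prod_type,
        Fin.sum_univ_two, hv]
      norm_num [Complex.conj_ofReal, map_mul]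
      push_cast
      linear_combination ((rt:ℂ))^2 * mc (x (0,0)) + ((rt:ℂ))^2 * mc (x (1,0))
        + mc (x (0,1)) + mc (x (1,1))
    have hcs := inner_mul_inner_self_le (𝕜 := ℂ) u v
    have hvu : (inner ℂ v u : ℂ) = (starRingEnd ℂ) (Ax μ ν Φ0 Φ1 x) := by
      rw [← inner_conj_symm, huv]
    rw [huv, huu, hvv, hvu] at hcs
    simp only [RCLike.norm_conj, Complex.ofReal_re] at hcs
    have hnorm : Complex.normSq (Ax μ ν Φ0 Φ1 x) = ‖Ax μ ν Φ0 Φ1 x‖ * ‖Ax μ ν Φ0 Φ1 x‖ := by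
      rw [Complex.normSq_eq_norm_sq, pow_two]
    have hKval : (μ/rt)^2 * (Complex.normSq (Φ0 0) + Complex.normSq (Φ0 1))
        + ν^2 * (Complex.normSq (Φ1 0) + Complex.normSq (Φ1 1)) = K := by
      rw [hΦ0, hΦ1, hKdef, div_pow, hrt2]; ring
    have hS0 : 0 ≤ (1+s) * (Complex.normSq (x (0,0)) + Complex.normSq (x (1,0)))
        + (Complex.normSq (x (0,1)) + Complex.normSq (x (1,1))) := by
      have := Complex.normSq_nonneg (x (0,0)); have := Complex.normSq_nonneg (x (1,0))
      have := Complex.normSq_nonneg (x (0,1)); have := Complex.normSq_nonneg (x (1,1))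
      nlinarith
    rw [hKval, hrt2] at hcs
    rw [hnorm]
    calc ‖Ax μ ν Φ0 Φ1 x‖ * ‖Ax μ ν Φ0 Φ1 x‖ ≤ K * _ := hcs
    _ ≤ c * _ := mul_le_mul_of_nonneg_right hle hS0
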